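/- arXiv:2605.08077 — 2 statements merged into one kernel-verified Lean document; each statement's English description precedes it below -/
import Mathlib

section
/- Let s_1, …, s_{n+1} be elements of the extended real line [−∞, +∞] and let k be an integer with 1 ≤ k ≤ n+1. Then s_{n+1} ≤ OS_k(s_1, …, s_n, +∞) if and only if s_{n+1} ≤ OS_k(s_1, …, s_{n+1}); that is, comparing the last score against the k-th order statistic of the calibration scores augmented with +∞ is equivalent to comparing it against the k-th order statistic of the full sequence of all n+1 scores. -/
/-- The `k`-th order statistic (0-indexed: `k : Fin m` gives the `(k+1)`-th smallest
element, counted with multiplicity) of the values `s 0, …, s (m-1)`. -/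
noncomputable def orderStat {α : Type*} [LinearOrder α] {m : ℕ}
    (s : Fin m → α) (k : Fin m) : α :=
  s (Tuple.sort s k)

lemma le_orderStat_iff_count {α : Type*} [LinearOrder α] {m : ℕ}
    (t : Fin m → α) (k : Fin m) (a : α) :
    a ≤ orderStat t k ↔ (Finset.univ.filter fun i => t i < a).card ≤ (k : ℕ) := by
  set σ := Tuple.sort t with hσ
  have hmono : Monotone (t ∘ σ) := Tuple.monotone_sort t
  have himg : (Finset.univ.filter fun j => t (σ j) < a).image σ
      = Finset.univ.filter fun i => t i < a := by
    ext i
    simp only [Finset.mem_image, Finset.mem_filter, Finset.mem_univ, true_and]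
    constructor
    · rintro ⟨j, hj, rfl⟩; exact hj
    · intro h; exact ⟨σ.symm i, by simpa using h, by simp⟩
  have hcard : (Finset.univ.filter fun i => t i < a).card
      = (Finset.univ.filter fun j => t (σ j) < a).card := by
    rw [← himg, Finset.card_image_of_injective _ σ.injective]
  rw [hcard]
  unfold orderStat
  constructor
  · intro h
    calc (Finset.univ.filter fun j => t (σ j) < a).card
        ≤ (Finset.Iio k).card := by
          apply Finset.card_le_card
          intro j hj
          simp only [Finset.mem_filter, Finset.mem_univ, true_and] at hj
          rw [Finset.mem_Iio]
          by_contra hc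
          push_neg at hc
          exact absurd (hmono hc) (not_le.mpr (lt_of_lt_of_le hj h))
      _ = (k : ℕ) := by rw [Fin.card_Iio]
  · intro h
    by_contra h'
    push_neg at h'
    have hsub : Finset.Iic k ⊆ Finset.univ.filter fun j => t (σ j) < a := by
      intro j hj
      rw [Finset.mem_Iic] at hj
      simp only [Finset.mem_filter, Finset.mem_univ, true_and]
      exact lt_of_le_of_lt (hmono hj) h'
    have := Finset.card_le_card hsub
    rw [Fin.card_Iic] at this
    omega
/-- Comparing the last score `s (n+1)` against the `k`-th order statistic of the
calibration scores `s 1, …, s n` augmented with `+∞` is equivalent to comparing it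
against the `k`-th order statistic of the full sequence `s 1, …, s (n+1)`. -/
theorem le_orderStat_augmented_iff_le_orderStat
    {n : ℕ} (s : Fin (n + 1) → EReal) (k : ℕ) (hk1 : 1 ≤ k) (hk2 : k ≤ n + 1) :
    s (Fin.last n) ≤ orderStat (Fin.snoc (Fin.init s) (⊤ : EReal)) ⟨k - 1, by omega⟩ ↔
      s (Fin.last n) ≤ orderStat s ⟨k - 1, by omega⟩ := by
  rw [le_orderStat_iff_count, le_orderStat_iff_count]
  have hfun : ∀ i : Fin (n + 1),
      (Fin.snoc (Fin.init s) (⊤ : EReal) i < s (Fin.last n)) ↔ (s i < s (Fin.last n)) := by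
    intro i
    by_cases h : i = Fin.last n
    · subst h
      simp [Fin.snoc_last]
    · obtain ⟨j, rfl⟩ := Fin.exists_castSucc_eq.mpr h
      simp [Fin.snoc_castSucc, Fin.init]
  have : (Finset.univ.filter fun i => Fin.snoc (Fin.init s) (⊤ : EReal) i < s (Fin.last n))
      = Finset.univ.filter fun i => s i < s (Fin.last n) := by
    apply Finset.filter_congr
    intro i _
    simp [hfun i]
  rw [this]
end

section
/- Let (S_1, …, S_n, S_{n+1}) be an exchangeable sequence of random variables with values in the extended real line [−∞, +∞], let α ∈ (0, 1), and set k = ⌈(n+1)(1−α)⌉. Define the (random) conformal threshold τ_α = OS_k(S_1, …, S_n) (the k-th smallest of the n calibration scores) if k ≤ n, and τ_α = +∞ if k > n. Then P(S_{n+1} ≤ τ_α) ≥ 1 − α, and this holds regardless of whether ties exist among the scores. -/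
/-!
Let `r_j` be the number of scores strictly below `S_j`. The event `S_{n+1} ≤ OS_k(S_1, …, S_n)` is
exactly `r_{n+1} < k`, whatever the ties. For every outcome at least `k` indices `j` have `r_j < k`
(the first `k` in sorted order), and by exchangeability the `n + 1` events `{r_j < k}` are
equiprobable, so `k ≤ (n + 1) P(r_{n+1} < k)`. Finally `k ≥ (n + 1)(1 - α)`.
-/

open MeasureTheory

/-- A finite sequence of random variables `Z : Fin m → Ω → α` is exchangeable
(w.r.t. the probability measure `μ`) if for every permutation `σ` of `Fin m`,
the joint law of the permuted sequence equals the joint law of the original one. -/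
def Exchangeable {Ω α : Type*} [MeasurableSpace Ω] [MeasurableSpace α] {m : ℕ}
    (μ : Measure Ω) (Z : Fin m → Ω → α) : Prop :=
  ∀ σ : Equiv.Perm (Fin m),
    Measure.map (fun ω => fun i => Z (σ i) ω) μ = Measure.map (fun ω => fun i => Z i ω) μ

open Finset
open scoped ENNReal

section CountLT

variable {α : Type*} [LinearOrder α] {m : ℕ}

def countLT (v : Fin m → α) (x : α) : ℕ :=
  #{i | v i < x}

lemma countLT_comp_perm (v : Fin m → α) (σ : Equiv.Perm (Fin m)) (x : α) :
    countLT (v ∘ σ) x = countLT v x :=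
  Finset.card_equiv σ (by simp)

lemma countLT_apply_last (v : Fin (m + 1) → α) :
    countLT v (v (Fin.last m)) = countLT (v ∘ Fin.castSucc) (v (Fin.last m)) := by
  rw [countLT, Fin.univ_castSuccEmb, Finset.filter_cons, if_neg (lt_irrefl _),
    Finset.filter_map, Finset.card_map]
  rfl

lemma le_orderStat_iff_countLT_le (s : Fin m → α) (k : Fin m) (x : α) :
    x ≤ orderStat s k ↔ countLT s x ≤ k := by
  set t := s ∘ Tuple.sort s
  have ht : Monotone t := Tuple.monotone_sort s
  rw [← countLT_comp_perm s (Tuple.sort s), orderStat]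
  change x ≤ t k ↔ countLT t x ≤ k
  constructor
  · intro hx
    have : ({i | t i < x} : Finset _) ⊆ Iio k := fun i hi =>
      mem_Iio.2 (lt_of_not_ge fun hki => ((mem_filter.1 hi).2.trans_le (hx.trans (ht hki))).false)
    simpa [countLT] using card_le_card this
  · intro hcount
    by_contra! hlt
    have : Iic k ⊆ ({i | t i < x} : Finset _) := fun i hi =>
      mem_filter.2 ⟨mem_univ _, (ht (mem_Iic.1 hi)).trans_lt hlt⟩
    simpa using (card_le_card this).trans hcount

-- Witnessed by the first `K` indices in sorted order.
lemma le_card_countLT_lt (v : Fin m → α) {K : ℕ} (hK : K ≤ m) :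
    K ≤ #{j | countLT v (v j) < K} := by
  have hsorted (r : Fin m) : countLT v (v (Tuple.sort v r)) ≤ r :=
    (le_orderStat_iff_countLT_le v r _).1 le_rfl
  simpa using card_le_card_of_injOn (s := (univ : Finset (Fin K)))
    (fun r => Tuple.sort v (Fin.castLE hK r))
    (fun r _ => mem_filter.2 ⟨mem_univ _, (hsorted _).trans_lt r.isLt⟩)
    (fun r _ r' _ h => Fin.castLE_injective hK ((Tuple.sort v).injective h))

end CountLT

section Exchangeable

variable {Ω α : Type*} [MeasurableSpace Ω] [MeasurableSpace α] {m : ℕ} {μ : Measure Ω}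
  {Z : Fin m → Ω → α}

lemma Exchangeable.measure_preimage_perm (hZ : Exchangeable μ Z) (hZm : ∀ i, Measurable (Z i))
    (σ : Equiv.Perm (Fin m)) {B : Set (Fin m → α)} (hB : MeasurableSet B) :
    μ ((fun ω i => Z (σ i) ω) ⁻¹' B) = μ ((fun ω i => Z i ω) ⁻¹' B) := by
  rw [← Measure.map_apply (measurable_pi_lambda _ fun i => hZm (σ i)) hB,
    ← Measure.map_apply (measurable_pi_lambda _ hZm) hB, hZ σ]

variable [LinearOrder α] [TopologicalSpace α] [OrderClosedTopology α] [SecondCountableTopology α]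
  [OpensMeasurableSpace α]

lemma measurableSet_countLT_lt (j : Fin m) (K : ℕ) :
    MeasurableSet {v : Fin m → α | countLT v (v j) < K} := by
  have : Measurable fun v : Fin m → α => countLT v (v j) := by
    simp only [countLT, Finset.card_filter]
    exact Finset.measurable_sum _ fun i _ => Measurable.ite
      (measurableSet_lt (measurable_pi_apply i) (measurable_pi_apply j)) measurable_const
      measurable_const
  exact this measurableSet_Iio

lemma Exchangeable.measure_countLT_lt_eq (hZ : Exchangeable μ Z) (hZm : ∀ i, Measurable (Z i))
    (K : ℕ) (i j : Fin m) :
    μ {ω | countLT (Z · ω) (Z i ω) < K} = μ {ω | countLT (Z · ω) (Z j ω) < K} := by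
  have hswap : {ω | countLT (Z · ω) (Z i ω) < K} =
      (fun ω l => Z (Equiv.swap i j l) ω) ⁻¹' {v | countLT v (v j) < K} := by
    ext ω
    change _ < K ↔ countLT ((Z · ω) ∘ Equiv.swap i j) (Z (Equiv.swap i j j) ω) < K
    rw [countLT_comp_perm, Equiv.swap_apply_right]
  rw [hswap]
  exact hZ.measure_preimage_perm hZm (Equiv.swap i j) (measurableSet_countLT_lt j K)

lemma Exchangeable.le_mul_measure_countLT_lt (hZ : Exchangeable μ Z)
    (hZm : ∀ i, Measurable (Z i)) {K : ℕ} (hK : K ≤ m) (j : Fin m) :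
    K * μ Set.univ ≤ m * μ {ω | countLT (Z · ω) (Z j ω) < K} := by
  set A : Fin m → Set Ω := fun i => {ω | countLT (Z · ω) (Z i ω) < K}
  have hA (i : Fin m) : MeasurableSet (A i) :=
    measurable_pi_lambda _ hZm (measurableSet_countLT_lt i K)
  calc (K : ℝ≥0∞) * μ Set.univ = ∫⁻ _, (K : ℝ≥0∞) ∂μ := (lintegral_const _).symm
    _ ≤ ∫⁻ ω, ∑ i, (A i).indicator 1 ω ∂μ := lintegral_mono fun ω => by
      have : ∑ i, (A i).indicator (1 : Ω → ℝ≥0∞) ω = #{i | countLT (Z · ω) (Z i ω) < K} := by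
        simp [Set.indicator_apply, A]
      rw [this]
      exact Nat.cast_le.2 (le_card_countLT_lt (Z · ω) hK)
    _ = ∑ i, μ (A i) := by
      rw [lintegral_finsetSum _ fun i _ => measurable_one.indicator (hA i)]
      exact Finset.sum_congr rfl fun i _ => lintegral_indicator_one (hA i)
    _ = m * μ (A j) := by
      simp [hZ.measure_countLT_lt_eq hZm K _ j, A]

end Exchangeable

lemma ENNReal.ofReal_le_of_le_natCast_le_mul {x : ℝ} {y : ℝ≥0∞} {N K : ℕ} (hN : 0 < N)
    (hx : N * x ≤ K) (hK : (K : ℝ≥0∞) ≤ N * y) : ENNReal.ofReal x ≤ y := by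
  refine (ENNReal.mul_le_mul_iff_right (by positivity) (ENNReal.natCast_ne_top N)).1 ?_
  calc (N : ℝ≥0∞) * ENNReal.ofReal x = ENNReal.ofReal (N * x) := by
        rw [ENNReal.ofReal_mul (Nat.cast_nonneg N), ENNReal.ofReal_natCast]
    _ ≤ K := by simpa using ENNReal.ofReal_le_ofReal hx
    _ ≤ N * y := hK

/-- Coverage under exchangeability (split conformal prediction): for an exchangeable
sequence `(S 1, …, S n, S (n+1))` of extended-real scores, a risk level `α ∈ (0,1)`,
and `k = ⌈(n+1)(1-α)⌉`, the test score `S (n+1)` is at or below the conformal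
threshold `τ_α` (the `k`-th smallest of the `n` calibration scores if `k ≤ n`, and
`+∞` if `k > n`) with probability at least `1 - α`, regardless of ties. -/
theorem conformal_coverage
    {Ω : Type*} [MeasurableSpace Ω] {n : ℕ}
    (μ : Measure Ω) [IsProbabilityMeasure μ]
    (S : Fin (n + 1) → Ω → EReal) (hSmeas : ∀ i, Measurable (S i))
    (hexch : Exchangeable μ S)
    (a : ℝ) (ha : a ∈ Set.Ioo (0 : ℝ) 1)
    (k : ℕ) (hk : k = ⌈((n : ℝ) + 1) * (1 - a)⌉₊) :
    ENNReal.ofReal (1 - a) ≤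
      μ {ω | S (Fin.last n) ω ≤
        if h : k ≤ n then
          orderStat (fun i : Fin n => S (Fin.castSucc i) ω)
            ⟨k - 1, by
              have h1 : 0 < k := by
                rw [hk]
                exact Nat.ceil_pos.mpr (mul_pos (by positivity) (sub_pos.mpr ha.2))
              omega⟩
        else (⊤ : EReal)} := by
  have hk_pos : 0 < k := hk ▸ Nat.ceil_pos.mpr (mul_pos (by positivity) (sub_pos.mpr ha.2))
  by_cases hkn : k ≤ n
  · simp only [dif_pos hkn]
    have hevent : {ω | S (Fin.last n) ω ≤ orderStat (fun i : Fin n => S i.castSucc ω)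
        ⟨k - 1, by omega⟩} = {ω | countLT (S · ω) (S (Fin.last n) ω) < k} := by
      ext ω
      change _ ≤ orderStat ((S · ω) ∘ Fin.castSucc) _ ↔ countLT _ _ < k
      rw [le_orderStat_iff_countLT_le, ← countLT_apply_last (S · ω), Fin.val_mk]
      omega
    rw [hevent]
    refine ENNReal.ofReal_le_of_le_natCast_le_mul (N := n + 1) (K := k) n.succ_pos ?_ ?_
    · exact hk ▸ by exact_mod_cast Nat.le_ceil _
    · simpa using hexch.le_mul_measure_countLT_lt hSmeas (K := k) (by omega) (Fin.last n)
  · simp only [dif_neg hkn, le_top, Set.ofPred_true, measure_univ]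
    exact ENNReal.ofReal_le_one.2 (by linarith [ha.1])
end
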